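/- arXiv:1107.1561 — 2 statements merged into one kernel-verified Lean document; each statement's English description precedes it below -/
import Mathlib

section
/- Let X be a real m×n matrix whose columns are partitioned as X = [X₁, X₂, ..., X_k], where every column of X_i lies in a linear subspace S_i of ℝ^m, the subspaces S₁, ..., S_k are independent, and X_i has d_i columns with rank(X_i) = r_i. Then the i-th diagonal block of SIM(X) (the d_i×d_i principal submatrix of SIM(X) indexed by the columns of X_i) has rank equal to r_i. -/
/-!
Independence of the `S i` gives a linear map of `ℝ^m` fixing `S i` and killing every other
`S j`; applied to the columns of `X` it shows that each row of `X`, with the entries outside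
block `i` set to zero, still lies in the row space `U` of `X`. So extension by zero maps the
row space `V` of `X_i` into `U`, while its adjoint, restriction to block `i`, maps `U` onto `V`.
Such a map intertwines the orthogonal projections onto `V` and `U`, hence the `i`-th diagonal
block of `SIM X` is the projection matrix onto `V`, whose rank is `dim V = rank X_i`.
-/

open Matrix

/-- The nuclear norm of a real matrix: the sum of its singular values
(the square roots of the eigenvalues of `Aᵀ * A`). -/
noncomputable def nuclearNorm {m n : Type*} [Fintype m] [Fintype n] [DecidableEq n]
    (A : Matrix m n ℝ) : ℝ :=
  ∑ i, Real.sqrt ((show (Aᵀ * A).IsHermitian by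
    simpa [Matrix.conjTranspose_eq_transpose_of_trivial] using
      Matrix.isHermitian_conjTranspose_mul_self A).eigenvalues i)

/-- The shape interaction matrix of a real `m × n` matrix `X`: the `n × n`
orthogonal projection matrix onto the row space of `X`. -/
noncomputable def SIM {m n : ℕ} (X : Matrix (Fin m) (Fin n) ℝ) :
    Matrix (Fin n) (Fin n) ℝ :=
  let U : Submodule ℝ (EuclideanSpace ℝ (Fin n)) :=
    Submodule.span ℝ (Set.range fun i => (WithLp.toLp 2 (X i) : EuclideanSpace ℝ (Fin n)))
  LinearMap.toMatrix'
    ((WithLp.linearEquiv 2 ℝ (Fin n → ℝ)).toLinearMap ∘ₗ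
      ((U.subtypeL.comp (U.orthogonalProjectionOnto)).toLinearMap :
        EuclideanSpace ℝ (Fin n) →ₗ[ℝ] EuclideanSpace ℝ (Fin n)) ∘ₗ
      (WithLp.linearEquiv 2 ℝ (Fin n → ℝ)).symm.toLinearMap :
      (Fin n → ℝ) →ₗ[ℝ] (Fin n → ℝ))

open Matrix Submodule Module
open scoped RealInnerProductSpace

theorem Submodule.exists_linearMap_eq_self_and_eq_zero_of_iSupIndep {K E ι : Type*}
    [DivisionRing K] [AddCommGroup E] [Module K E] {S : ι → Submodule K E} (hS : iSupIndep S)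
    (i : ι) : ∃ π : E →ₗ[K] E, (∀ v ∈ S i, π v = v) ∧ ∀ j ≠ i, ∀ v ∈ S j, π v = 0 := by
  obtain ⟨q, hle, hq⟩ := (hS i).symm.exists_isCompl
  refine ⟨(S i).projection q hq.symm, fun v hv => projection_apply_of_mem_left _ hv,
    fun j hj v hv => ?_⟩
  rw [projection_apply_eq_zero_iff]
  exact hle (mem_iSup_of_mem j (mem_iSup_of_mem hj hv))

theorem Matrix.mem_span_range_mul {R l m n : Type*} [CommSemiring R] [Fintype m]
    (A : Matrix l m R) (X : Matrix m n R) (s : l) : (A * X) s ∈ span R (Set.range X) :=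
  (range_vecMulLinear X).le ⟨A s, rfl⟩

theorem Matrix.mem_span_range_of_iSupIndep {K m n ι : Type*} [Field K] [Fintype m]
    [DecidableEq m] [DecidableEq ι] (X : Matrix m n K) {S : ι → Submodule K (m → K)}
    (hS : iSupIndep S) {c : n → ι} (hX : ∀ j, Xᵀ j ∈ S (c j)) (i : ι) (s : m) :
    (fun j => if c j = i then X s j else 0) ∈ span K (Set.range X) := by
  obtain ⟨π, hπ_self, hπ_zero⟩ := exists_linearMap_eq_self_and_eq_zero_of_iSupIndep hS i
  convert mem_span_range_mul (LinearMap.toMatrix' π) X s using 1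
  ext j
  change _ = (LinearMap.toMatrix' π *ᵥ Xᵀ j) s
  rw [LinearMap.toMatrix'_mulVec]
  split_ifs with h
  · rw [hπ_self _ (h ▸ hX j)]; rfl
  · rw [hπ_zero _ h _ (hX j)]; rfl

theorem Submodule.starProjection_apply_eq_of_mapsTo {𝕜 E F : Type*} [RCLike 𝕜]
    [NormedAddCommGroup E] [InnerProductSpace 𝕜 E] [NormedAddCommGroup F] [InnerProductSpace 𝕜 F]
    {U : Submodule 𝕜 E} {V : Submodule 𝕜 F} [U.HasOrthogonalProjection]
    [V.HasOrthogonalProjection] {T : F →ₗ[𝕜] E} (hV : Set.MapsTo T V U)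
    (hVperp : Set.MapsTo T Vᗮ Uᗮ) (x : F) :
    U.starProjection (T x) = T (V.starProjection x) := by
  refine eq_starProjection_of_mem_orthogonal (hV (V.starProjection_apply_mem x)) ?_
  rw [← map_sub]
  exact hVperp (V.sub_starProjection_mem_orthogonal x)

namespace EuclideanSpace

section Reindex

variable {ι n : Type*} {e : ι → n}

noncomputable def extendByZero (e : ι → n) : EuclideanSpace ℝ ι →ₗ[ℝ] EuclideanSpace ℝ n :=
  (WithLp.linearEquiv 2 ℝ (ι → ℝ)).symm.arrowCongr (WithLp.linearEquiv 2 ℝ (n → ℝ)).symm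
    (Function.ExtendByZero.linearMap ℝ e)

noncomputable def funLeft (e : ι → n) : EuclideanSpace ℝ n →ₗ[ℝ] EuclideanSpace ℝ ι :=
  (WithLp.linearEquiv 2 ℝ (n → ℝ)).symm.arrowCongr (WithLp.linearEquiv 2 ℝ (ι → ℝ)).symm
    (LinearMap.funLeft ℝ ℝ e)

theorem extendByZero_apply (w : EuclideanSpace ℝ ι) (j : n) :
    extendByZero e w j = Function.extend e w 0 j := by
  simp [extendByZero]

theorem extendByZero_apply_apply (he : Function.Injective e) (w : EuclideanSpace ℝ ι) (a : ι) :
    extendByZero e w (e a) = w a := by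
  simp [extendByZero_apply, he.extend_apply]

theorem extendByZero_single [DecidableEq ι] [DecidableEq n] (he : Function.Injective e) (b : ι) :
    extendByZero e (single b 1) = single (e b) 1 := by
  ext j
  by_cases hj : ∃ a, e a = j
  · obtain ⟨a, rfl⟩ := hj
    simp [extendByZero_apply_apply he, he.eq_iff]
  · rw [extendByZero_apply, Function.extend_apply' _ _ _ hj, Pi.zero_apply, PiLp.single_apply,
      if_neg fun h => hj ⟨b, h.symm⟩]

@[simp]
theorem funLeft_apply (u : EuclideanSpace ℝ n) (a : ι) : funLeft e u a = u (e a) := by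
  simp [funLeft]

theorem inner_extendByZero [Fintype ι] [Fintype n] (he : Function.Injective e)
    (u : EuclideanSpace ℝ n) (w : EuclideanSpace ℝ ι) :
    ⟪u, extendByZero e w⟫ = ⟪funLeft e u, w⟫ := by
  simp only [PiLp.inner_apply, RCLike.inner_apply, conj_trivial, funLeft_apply]
  refine (Fintype.sum_of_injective e he _ _ (fun j hj => ?_) fun a => ?_).symm
  · simp [extendByZero_apply, Function.extend_apply' _ _ _ hj]
  · simp [extendByZero_apply_apply he]

end Reindex

section ProjectionMatrix

variable {n : Type*} [Fintype n] [DecidableEq n]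

noncomputable def starProjectionMatrix (U : Submodule ℝ (EuclideanSpace ℝ n)) : Matrix n n ℝ :=
  LinearMap.toMatrix' ((WithLp.linearEquiv 2 ℝ (n → ℝ)).conj U.starProjection.toLinearMap)

theorem starProjectionMatrix_apply (U : Submodule ℝ (EuclideanSpace ℝ n)) (a b : n) :
    starProjectionMatrix U a b = U.starProjection (single b 1) a := by
  simp [starProjectionMatrix, LinearMap.toMatrix'_apply, LinearEquiv.conj_apply]

theorem rank_starProjectionMatrix (U : Submodule ℝ (EuclideanSpace ℝ n)) :
    (starProjectionMatrix U).rank = finrank ℝ U := by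
  rw [rank, starProjectionMatrix, ← Matrix.toLin'_apply', Matrix.toLin'_toMatrix',
    LinearEquiv.conj_apply, LinearMap.range_comp, LinearEquiv.range, Submodule.map_top,
    LinearMap.range_comp]
  have hrange : LinearMap.range (U.starProjection : EuclideanSpace ℝ n →ₗ[ℝ] _) = U :=
    range_starProjection U
  rw [hrange]
  exact LinearEquiv.finrank_map_eq _ _

/-- `funLeft e` is the adjoint of `extendByZero e`, so `extendByZero e` also maps `Vᗮ` into `Uᗮ`
and hence intertwines the two orthogonal projections. -/
theorem starProjectionMatrix_submatrix {ι : Type*} [Fintype ι] [DecidableEq ι] {e : ι → n}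
    (he : Function.Injective e) {U : Submodule ℝ (EuclideanSpace ℝ n)}
    {V : Submodule ℝ (EuclideanSpace ℝ ι)} (hV : Set.MapsTo (extendByZero e) V U)
    (hU : Set.MapsTo (funLeft e) U V) :
    (starProjectionMatrix U).submatrix e e = starProjectionMatrix V := by
  have hVperp : Set.MapsTo (extendByZero e) Vᗮ Uᗮ := fun w hw u hu => by
    rw [inner_extendByZero he]
    exact hw _ (hU hu)
  ext a b
  rw [submatrix_apply, starProjectionMatrix_apply, starProjectionMatrix_apply,
    ← extendByZero_single he, starProjection_apply_eq_of_mapsTo hV hVperp,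
    extendByZero_apply_apply he]

end ProjectionMatrix

end EuclideanSpace

namespace Matrix

variable {m n : Type*}

noncomputable def rowSpace (X : Matrix m n ℝ) : Submodule ℝ (EuclideanSpace ℝ n) :=
  span ℝ (Set.range fun i => WithLp.toLp 2 (X i))

theorem SIM_eq_starProjectionMatrix {m n : ℕ} (X : Matrix (Fin m) (Fin n) ℝ) :
    SIM X = EuclideanSpace.starProjectionMatrix X.rowSpace :=
  rfl

theorem rowSpace_eq_map (X : Matrix m n ℝ) :
    X.rowSpace = (span ℝ (Set.range X)).map
      ((WithLp.linearEquiv 2 ℝ (n → ℝ)).symm : (n → ℝ) →ₗ[ℝ] EuclideanSpace ℝ n) := by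
  rw [rowSpace, map_span]
  exact congrArg _ (Set.range_comp _ (X : m → n → ℝ))

theorem finrank_rowSpace [Fintype m] [Fintype n] (X : Matrix m n ℝ) :
    finrank ℝ X.rowSpace = X.rank := by
  rw [rowSpace_eq_map, LinearEquiv.finrank_map_eq, rank_eq_finrank_span_row]
  rfl

theorem rowSpace_submatrix {ι : Type*} (X : Matrix m n ℝ) (e : ι → n) :
    (X.submatrix id e).rowSpace = X.rowSpace.map (EuclideanSpace.funLeft e) := by
  rw [rowSpace, rowSpace, map_span, ← Set.range_comp]
  rfl

theorem mapsTo_extendByZero_rowSpace_of_iSupIndep {ι : Type*} [Fintype m] [DecidableEq m]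
    [DecidableEq ι] (X : Matrix m n ℝ) {S : ι → Submodule ℝ (m → ℝ)} (hS : iSupIndep S)
    {c : n → ι} (hX : ∀ j, Xᵀ j ∈ S (c j)) (i : ι) :
    Set.MapsTo (EuclideanSpace.extendByZero (Subtype.val : {j // c j = i} → n))
      (X.submatrix id (Subtype.val : {j // c j = i} → n)).rowSpace X.rowSpace := by
  refine fun v hv => (span_le (p := X.rowSpace.comap _)).2 ?_ hv
  rintro _ ⟨s, rfl⟩
  rw [SetLike.mem_coe, mem_comap, rowSpace_eq_map]
  convert mem_map_of_mem (X.mem_span_range_of_iSupIndep hS hX i s)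
  ext j
  rw [EuclideanSpace.extendByZero_apply]
  change Function.extend Subtype.val (fun a : {j // c j = i} => X s a) 0 j =
    if c j = i then X s j else 0
  by_cases h : c j = i
  · rw [Function.extend_val_apply (p := fun j => c j = i) h, if_pos h]
  · rw [Function.extend_val_apply' (p := fun j => c j = i) h, if_neg h, Pi.zero_apply]

end Matrix

theorem sim_diagonal_block_rank_general {m n k : ℕ} (X : Matrix (Fin m) (Fin n) ℝ)
    (S : Fin k → Submodule ℝ (Fin m → ℝ)) (c : Fin n → Fin k)
    (hcol : ∀ j : Fin n, (fun i => X i j) ∈ S (c j))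
    (hind : iSupIndep S)
    (r : Fin k → ℕ)
    (hr : ∀ i : Fin k,
      (X.submatrix id (fun a : {j : Fin n // c j = i} => (a : Fin n))).rank = r i) :
    ∀ i : Fin k,
      ((SIM X).submatrix (fun a : {j : Fin n // c j = i} => (a : Fin n))
        (fun a : {j : Fin n // c j = i} => (a : Fin n))).rank = r i := by
  intro i
  have hrestrict : Set.MapsTo (EuclideanSpace.funLeft (Subtype.val : {j // c j = i} → Fin n))
      X.rowSpace (X.submatrix id (Subtype.val : {j // c j = i} → Fin n)).rowSpace := by
    rw [rowSpace_submatrix]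
    exact fun u hu => mem_map_of_mem hu
  rw [SIM_eq_starProjectionMatrix, EuclideanSpace.starProjectionMatrix_submatrix
    Subtype.val_injective (X.mapsTo_extendByZero_rowSpace_of_iSupIndep hind hcol i) hrestrict,
    EuclideanSpace.rank_starProjectionMatrix, finrank_rowSpace, hr i]

/-- If the columns of `X` are partitioned into blocks (block label `c j` for column `j`),
each column of the `i`-th block lies in a linear subspace `S i` of `ℝ^m`, the subspaces
are independent, the `i`-th block `X_i` has `d i` columns and rank `r i`, then the `i`-th
diagonal block of `SIM X` (the principal submatrix indexed by the columns of `X_i`)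
has rank `r i`. -/
theorem sim_diagonal_block_rank {m n k : ℕ} (X : Matrix (Fin m) (Fin n) ℝ)
    (S : Fin k → Submodule ℝ (Fin m → ℝ)) (c : Fin n → Fin k)
    (hcol : ∀ j : Fin n, (fun i => X i j) ∈ S (c j))
    (hind : iSupIndep S)
    (d r : Fin k → ℕ)
    (hd : ∀ i : Fin k, Fintype.card {j : Fin n // c j = i} = d i)
    (hr : ∀ i : Fin k,
      (X.submatrix id (fun a : {j : Fin n // c j = i} => (a : Fin n))).rank = r i) :
    ∀ i : Fin k,
      ((SIM X).submatrix (fun a : {j : Fin n // c j = i} => (a : Fin n))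
        (fun a : {j : Fin n // c j = i} => (a : Fin n))).rank = r i :=
  sim_diagonal_block_rank_general X S c hcol hind r hr
end

section
/- Let X be a real m×n matrix whose columns are partitioned as X = [X₁, X₂, ..., X_k], where every column of X_i lies in a linear subspace S_i of ℝ^m and the subspaces S₁, ..., S_k are independent. Then the unique minimizer of ‖Z‖_* over all n×n matrices Z with X = XZ is block diagonal conforming to this partition: its (p,q) entry is zero whenever columns p and q of X belong to different blocks. -/
open Matrix

/-!
The minimizer is the orthogonal projection `P` onto `(ker X)ᗮ`, the row space of `X`
(`V Vᵀ` for a skinny SVD `X = U Σ Vᵀ`). Every feasible `W` satisfies `P W = P`, hence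
`Wᵀ W = P + (W - P)ᵀ (W - P)`. Evaluating on an orthonormal eigenbasis `uᵢ` of `Wᵀ W`, the
eigenvalues are `pᵢ + fᵢ` with `pᵢ = uᵢᵀ P uᵢ ∈ [0, 1]` and `fᵢ ≥ 0`, so
`‖W‖_* = ∑ √(pᵢ + fᵢ) ≥ ∑ pᵢ = tr P = ‖P‖_*`, with equality only if every `fᵢ` vanishes,
i.e. `W = P`.

Independence of the subspaces makes `ker X` stable under restricting a vector to the
coordinates of one block. These coordinate masks are symmetric, so they commute with `P`,
which forces `P` to be block diagonal.
-/

section InnerProductSpace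

variable {𝕜 E F : Type*} [RCLike 𝕜] [NormedAddCommGroup E] [InnerProductSpace 𝕜 E]

open Submodule

lemma LinearMap.IsSymmetric.commute_starProjection {T : E →ₗ[𝕜] E} (hT : T.IsSymmetric)
    {K : Submodule 𝕜 E} [K.HasOrthogonalProjection] (hK : K ∈ Module.End.invtSubmodule T) :
    Commute (K.starProjection : E →ₗ[𝕜] E) T := by
  refine (LinearMap.IsIdempotentElem.commute_iff ?_).mpr ⟨?_, ?_⟩
  · exact K.isIdempotentElem_starProjection.map ContinuousLinearMap.toLinearMapRingHom
  · rwa [range_starProjection]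
  · rw [ker_starProjection]
    exact hT.orthogonalComplement_mem_invtSubmodule hK

variable [FiniteDimensional 𝕜 E] [AddCommGroup F] [Module 𝕜 F]

lemma LinearMap.comp_starProjection_orthogonal_ker (T : E →ₗ[𝕜] F) :
    T ∘ₗ ((LinearMap.ker T)ᗮ.starProjection : E →ₗ[𝕜] E) = T := by
  ext v
  have hv : v - (LinearMap.ker T)ᗮ.starProjection v ∈ LinearMap.ker T := by
    simpa only [orthogonal_orthogonal] using
      sub_starProjection_mem_orthogonal (K := (LinearMap.ker T)ᗮ) v
  rw [LinearMap.mem_ker, map_sub, sub_eq_zero] at hv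
  exact hv.symm

lemma LinearMap.starProjection_orthogonal_ker_comp_of_comp_eq {T : E →ₗ[𝕜] F} {S : E →ₗ[𝕜] E}
    (h : T ∘ₗ S = T) :
    ((LinearMap.ker T)ᗮ.starProjection : E →ₗ[𝕜] E) ∘ₗ S = (LinearMap.ker T)ᗮ.starProjection := by
  ext v
  have hv : S v - v ∈ LinearMap.ker T := by
    rw [LinearMap.mem_ker, map_sub, sub_eq_zero]
    exact LinearMap.congr_fun h v
  have := ((LinearMap.ker T)ᗮ.starProjection_apply_eq_zero_iff).mpr (le_orthogonal_orthogonal _ hv)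
  rwa [map_sub, sub_eq_zero] at this

end InnerProductSpace

lemma Real.le_sqrt_add_of_le_one {p f : ℝ} (hp₀ : 0 ≤ p) (hp₁ : p ≤ 1) (hf : 0 ≤ f) :
    p ≤ √(p + f) :=
  Real.le_sqrt_of_sq_le (by nlinarith)

lemma Real.eq_zero_of_sqrt_add_le {p f : ℝ} (hp₁ : p ≤ 1) (hf : 0 ≤ f) (h : √(p + f) ≤ p) :
    f = 0 := by
  have hp₀ : 0 ≤ p := (Real.sqrt_nonneg _).trans h
  have := (Real.sqrt_le_left hp₀).mp h
  nlinarith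

lemma isHermitian_transpose_mul_self {m n : Type*} [Fintype m] (A : Matrix m n ℝ) :
    (Aᵀ * A).IsHermitian := by
  simpa [conjTranspose_eq_transpose_of_trivial] using isHermitian_conjTranspose_mul_self A

section NuclearNorm

variable {n : Type*} [Fintype n]

lemma dotProduct_self_orthonormalBasis (b : OrthonormalBasis n ℝ (EuclideanSpace ℝ n)) (i : n) :
    (b i).ofLp ⬝ᵥ (b i).ofLp = 1 := by
  have := b.inner_eq_one i
  rwa [EuclideanSpace.inner_eq_star_dotProduct, star_trivial] at this

variable [DecidableEq n]

lemma nuclearNorm_eq_sum_sqrt_eigenvalues {m : Type*} [Fintype m] (A : Matrix m n ℝ)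
    (hA : (Aᵀ * A).IsHermitian) : nuclearNorm A = ∑ i, √(hA.eigenvalues i) :=
  rfl

lemma Matrix.IsHermitian.eigenvalues_eq_dotProduct {A : Matrix n n ℝ} (hA : A.IsHermitian)
    (i : n) :
    hA.eigenvalues i = (hA.eigenvectorBasis i).ofLp ⬝ᵥ A *ᵥ (hA.eigenvectorBasis i).ofLp := by
  simpa using hA.eigenvalues_eq i

lemma sum_dotProduct_mulVec_orthonormalBasis (b : OrthonormalBasis n ℝ (EuclideanSpace ℝ n))
    (A : Matrix n n ℝ) : ∑ i, (b i).ofLp ⬝ᵥ A *ᵥ (b i).ofLp = A.trace := by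
  have htr : LinearMap.trace ℝ _ (toEuclideanLin A) = A.trace := by
    rw [LinearMap.trace_eq_matrix_trace ℝ (EuclideanSpace.basisFun n ℝ).toBasis,
      toEuclideanLin_eq_toLin_orthonormal, LinearMap.toMatrix_toLin]
  rw [← htr, LinearMap.trace_eq_sum_inner _ b]
  refine Finset.sum_congr rfl fun i _ => ?_
  rw [← coe_toEuclideanCLM_eq_toEuclideanLin]
  exact (inner_toEuclideanCLM A _ _).symm

namespace IsStarProjection

variable {P : Matrix n n ℝ} (hP : IsStarProjection P)
include hP

open scoped MatrixOrder in
lemma dotProduct_mulVec_mem_Icc (v : n → ℝ) :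
    0 ≤ v ⬝ᵥ P *ᵥ v ∧ v ⬝ᵥ P *ᵥ v ≤ v ⬝ᵥ v := by
  have h₀ := hP.nonneg.posSemidef.dotProduct_mulVec_nonneg v
  have h₁ := hP.one_sub_nonneg.posSemidef.dotProduct_mulVec_nonneg v
  simp only [star_trivial, sub_mulVec, one_mulVec, dotProduct_sub, sub_nonneg] at h₀ h₁
  exact ⟨h₀, h₁⟩

omit [DecidableEq n] in
lemma transpose_eq : Pᵀ = P := by
  rw [← conjTranspose_eq_transpose_of_trivial, ← star_eq_conjTranspose, hP.isSelfAdjoint.star_eq]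

omit [DecidableEq n] in
lemma transpose_mul_self_eq_add {W : Matrix n n ℝ} (hPW : P * W = P) :
    Wᵀ * W = P + (W - P)ᵀ * (W - P) := by
  have hWP : Wᵀ * P = P := by rw [← hP.transpose_eq, ← transpose_mul, hPW, hP.transpose_eq]
  simp only [transpose_sub, sub_mul, mul_sub, hWP, hP.transpose_eq, hPW, hP.isIdempotentElem.eq]
  abel

lemma nuclearNorm_eq_trace : nuclearNorm P = P.trace := by
  have hM := isHermitian_transpose_mul_self P
  have hPP : Pᵀ * P = P := by rw [hP.transpose_eq, hP.isIdempotentElem.eq]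
  have hspec : spectrum ℝ (Pᵀ * P) ⊆ {0, 1} := by
    rw [hPP]
    exact hP.isIdempotentElem.spectrum_subset ℝ
  have hsqrt : ∀ i, √(hM.eigenvalues i) = hM.eigenvalues i := fun i => by
    obtain h | h : hM.eigenvalues i = 0 ∨ hM.eigenvalues i = 1 :=
      hspec (hM.eigenvalues_mem_spectrum_real i)
    all_goals simp [h]
  rw [nuclearNorm_eq_sum_sqrt_eigenvalues P hM, Finset.sum_congr rfl fun i _ => hsqrt i]
  simpa [hPP] using hM.trace_eq_sum_eigenvalues.symm

theorem trace_le_nuclearNorm {W : Matrix n n ℝ} (hPW : P * W = P) :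
    P.trace ≤ nuclearNorm W ∧ (nuclearNorm W ≤ P.trace → W = P) := by
  have hM := isHermitian_transpose_mul_self W
  set u := hM.eigenvectorBasis
  set p : n → ℝ := fun i => (u i).ofLp ⬝ᵥ P *ᵥ (u i).ofLp
  set f : n → ℝ := fun i => (u i).ofLp ⬝ᵥ ((W - P)ᵀ * (W - P)) *ᵥ (u i).ofLp
  have heig : ∀ i, hM.eigenvalues i = p i + f i := fun i => by
    rw [hM.eigenvalues_eq_dotProduct, ← dotProduct_add, ← add_mulVec,
      ← hP.transpose_mul_self_eq_add hPW]
  have hp : ∀ i, 0 ≤ p i ∧ p i ≤ 1 := fun i =>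
    dotProduct_self_orthonormalBasis u i ▸ hP.dotProduct_mulVec_mem_Icc _
  have hf : ∀ i, 0 ≤ f i := fun i => by
    have := (posSemidef_conjTranspose_mul_self (W - P)).dotProduct_mulVec_nonneg (u i).ofLp
    rwa [conjTranspose_eq_transpose_of_trivial, star_trivial] at this
  have hle : ∀ i ∈ Finset.univ, p i ≤ √(hM.eigenvalues i) := fun i _ =>
    heig i ▸ Real.le_sqrt_add_of_le_one (hp i).1 (hp i).2 (hf i)
  rw [nuclearNorm_eq_sum_sqrt_eigenvalues W hM, ← sum_dotProduct_mulVec_orthonormalBasis u P]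
  refine ⟨Finset.sum_le_sum hle, fun h => ?_⟩
  have heq := (Finset.sum_eq_sum_iff_of_le hle).mp (le_antisymm (Finset.sum_le_sum hle) h)
  have hf₀ : ∀ i, f i = 0 := fun i =>
    Real.eq_zero_of_sqrt_add_le (hp i).2 (hf i) (heig i ▸ (heq i (Finset.mem_univ i)).ge)
  have htr : ((W - P)ᴴ * (W - P)).trace = 0 := by
    rw [conjTranspose_eq_transpose_of_trivial, ← sum_dotProduct_mulVec_orthonormalBasis u]
    exact Finset.sum_eq_zero fun i _ => hf₀ i
  exact sub_eq_zero.mp (trace_conjTranspose_mul_self_eq_zero_iff.mp htr)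

end IsStarProjection

end NuclearNorm

namespace Matrix

section BlockMask

variable {n ι R : Type*} [DecidableEq n] [DecidableEq ι] [CommRing R]

def blockMask (c : n → ι) (b : ι) : Matrix n n R :=
  diagonal fun j => if c j = b then 1 else 0

lemma sum_blockMask [Fintype ι] (c : n → ι) : ∑ b, (blockMask c b : Matrix n n R) = 1 := by
  ext i j
  simp [blockMask, sum_apply, diagonal_apply, one_apply]

lemma blockMask_mulVec_apply [Fintype n] (c : n → ι) (b : ι) (v : n → R) (j : n) :
    (blockMask c b *ᵥ v) j = if c j = b then v j else 0 := by
  simp [blockMask, mulVec_diagonal]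

lemma mulVec_blockMask_mulVec_eq_zero [Fintype n] [Fintype ι] {m : Type*} {X : Matrix m n R}
    {S : ι → Submodule R (m → R)} {c : n → ι} (hcol : ∀ j, (fun i => X i j) ∈ S (c j))
    (hind : iSupIndep S) {v : n → R} (hv : X *ᵥ v = 0) (b : ι) :
    X *ᵥ (blockMask c b *ᵥ v) = 0 := by
  have hmem : ∀ b, X *ᵥ (blockMask c b *ᵥ v) ∈ S b := by
    intro b
    rw [mulVec_eq_sum]
    refine Submodule.sum_mem _ fun j _ => ?_
    rw [blockMask_mulVec_apply]
    split_ifs with h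
    · exact h ▸ Submodule.smul_of_tower_mem _ _ (hcol j)
    · simp
  have hsum : ∑ b, X *ᵥ (blockMask c b *ᵥ v) = 0 := by
    rw [← mulVec_sum, ← sum_mulVec, sum_blockMask, one_mulVec, hv]
  exact (iSupIndep_iff_finsetSum_eq_zero_imp_eq_zero S).mp hind Finset.univ _
    (fun b _ => hmem b) hsum b (Finset.mem_univ b)

lemma apply_eq_zero_of_commute_diagonal [Fintype n] [NoZeroDivisors R] {A : Matrix n n R}
    {d : n → R} (h : Commute A (diagonal d)) {p q : n} (hpq : d p ≠ d q) : A p q = 0 := by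
  have := congr_fun₂ h.eq p q
  rw [mul_diagonal, diagonal_mul, mul_comm, ← sub_eq_zero, ← sub_mul] at this
  exact (mul_eq_zero.mp this).resolve_left (sub_ne_zero.mpr hpq.symm)

end BlockMask

variable {m n : Type*} [Fintype n] [DecidableEq n]

noncomputable def rowSpaceProjection (X : Matrix m n ℝ) : Matrix n n ℝ :=
  (toEuclideanCLM (n := n) (𝕜 := ℝ)).symm (LinearMap.ker (toEuclideanLin X))ᗮ.starProjection

lemma toEuclideanLin_rowSpaceProjection (X : Matrix m n ℝ) :
    toEuclideanLin (rowSpaceProjection X) =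
      (LinearMap.ker (toEuclideanLin X))ᗮ.starProjection := by
  rw [← coe_toEuclideanCLM_eq_toEuclideanLin, rowSpaceProjection, StarAlgEquiv.apply_symm_apply]

lemma isStarProjection_rowSpaceProjection (X : Matrix m n ℝ) :
    IsStarProjection (rowSpaceProjection X) :=
  isStarProjection_starProjection.map (toEuclideanCLM (n := n) (𝕜 := ℝ)).symm.toStarAlgHom

lemma mul_rowSpaceProjection (X : Matrix m n ℝ) : X * rowSpaceProjection X = X := by
  apply toEuclideanLin.injective
  rw [toLpLin_mul_same, toEuclideanLin_rowSpaceProjection]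
  exact LinearMap.comp_starProjection_orthogonal_ker _

lemma rowSpaceProjection_mul_of_mul_eq {X : Matrix m n ℝ} {W : Matrix n n ℝ} (h : X * W = X) :
    rowSpaceProjection X * W = rowSpaceProjection X := by
  apply toEuclideanLin.injective
  rw [toLpLin_mul_same, toEuclideanLin_rowSpaceProjection]
  apply LinearMap.starProjection_orthogonal_ker_comp_of_comp_eq
  rw [← toLpLin_mul_same, h]

variable {ι : Type*} [Fintype ι] [DecidableEq ι] {X : Matrix m n ℝ}
  {S : ι → Submodule ℝ (m → ℝ)} {c : n → ι}

lemma rowSpaceProjection_commute_blockMask (hcol : ∀ j, (fun i => X i j) ∈ S (c j))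
    (hind : iSupIndep S) (b : ι) :
    Commute (rowSpaceProjection X) (blockMask c b) := by
  have hsymm : (toEuclideanLin (blockMask c b : Matrix n n ℝ)).IsSymmetric :=
    isSymmetric_toEuclideanLin_iff.mpr (isHermitian_diagonal _)
  have hinv : LinearMap.ker (toEuclideanLin X) ∈
      Module.End.invtSubmodule (toEuclideanLin (blockMask c b : Matrix n n ℝ)) := by
    intro v hv
    simp only [Submodule.mem_comap, LinearMap.mem_ker, toLpLin_apply, WithLp.toLp_eq_zero] at hv ⊢
    exact mulVec_blockMask_mulVec_eq_zero hcol hind hv b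
  have := hsymm.commute_starProjection (hsymm.orthogonalComplement_mem_invtSubmodule hinv)
  rw [← toEuclideanLin_rowSpaceProjection] at this
  simpa using this.map (toLpLinAlgEquiv (R := ℝ) (n := n) 2).symm

lemma rowSpaceProjection_apply_eq_zero (hcol : ∀ j, (fun i => X i j) ∈ S (c j))
    (hind : iSupIndep S) {p q : n} (hpq : c p ≠ c q) : rowSpaceProjection X p q = 0 :=
  apply_eq_zero_of_commute_diagonal (rowSpaceProjection_commute_blockMask hcol hind (c q))
    (by simp [hpq])

end Matrix

/-- If the columns of `X` are partitioned into blocks (block label `c j` for column `j`),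
each column of the `i`-th block lies in a linear subspace `S i` of `ℝ^m`, and the
subspaces are independent, then the minimizer of the nuclear norm over all `Z` with
`X = X * Z` exists, is unique, and is block diagonal conforming to the partition:
its `(p, q)` entry vanishes whenever columns `p` and `q` lie in different blocks. -/
theorem nuclearNorm_minimizer_block_diagonal {m n k : ℕ} (X : Matrix (Fin m) (Fin n) ℝ)
    (S : Fin k → Submodule ℝ (Fin m → ℝ)) (c : Fin n → Fin k)
    (hcol : ∀ j : Fin n, (fun i => X i j) ∈ S (c j))
    (hind : iSupIndep S) :
    ∃ Z : Matrix (Fin n) (Fin n) ℝ,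
      (X = X * Z ∧
        ∀ W : Matrix (Fin n) (Fin n) ℝ, X = X * W → nuclearNorm Z ≤ nuclearNorm W) ∧
      (∀ Z' : Matrix (Fin n) (Fin n) ℝ,
        (X = X * Z' ∧
          ∀ W : Matrix (Fin n) (Fin n) ℝ, X = X * W → nuclearNorm Z' ≤ nuclearNorm W) →
        Z' = Z) ∧
      (∀ p q : Fin n, c p ≠ c q → Z p q = 0) := by
  set P := rowSpaceProjection X
  have hP : IsStarProjection P := isStarProjection_rowSpaceProjection X
  have hXP : X = X * P := (mul_rowSpaceProjection X).symm
  have hPW : ∀ W, X = X * W → P * W = P := fun W hW => rowSpaceProjection_mul_of_mul_eq hW.symm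
  refine ⟨P, ⟨hXP, fun W hW => ?_⟩, fun Z' ⟨hZ', hZ'min⟩ => ?_,
    fun p q => rowSpaceProjection_apply_eq_zero hcol hind⟩
  · rw [hP.nuclearNorm_eq_trace]
    exact (hP.trace_le_nuclearNorm (hPW W hW)).1
  · refine (hP.trace_le_nuclearNorm (hPW Z' hZ')).2 ?_
    rw [← hP.nuclearNorm_eq_trace]
    exact hZ'min P hXP
end
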